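/- In the basic game with V − d·x − F > 0, the set I* = {1,...,i*}, where i* = max{ i : V·h_i/(Σ_{j=1}^i h_j) − h_i·x·d/(Σ_{j=1}^i h_j) − F ≥ 0 }, is a Nash equilibrium; moreover every scientist i < i* has strictly positive expected payoff in I*, and every scientist i > i* would have strictly negative expected payoff upon joining I*. -/

import Mathlib

/-!
Writing `c = V - x·d`, the payoff is `U_i(I) = c·h_i / h_I - F`. Since `U_{i*}` of the top set is
nonnegative and `F > 0`, the net value `c` is positive. Inside a fixed set the payoff therefore
increases strictly with `h_i`, so every member of `{1,…,i*}` does at least as well as `i*`, and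
strictly better when `i < i*`. A newcomer `j` gets `c·h_j / (h_j + h_{I*}) - F`, which is monotone
in `h_j`; by maximality of `i*` the scientist `i* + 1` would lose by joining, hence so does every
`j > i*`.
-/

open Finset

/-- Expected payoff of scientist `i` in the basic game when the participating set is `I`:
`U_i(I) = V·h_i/h_I − h_i·x·d/h_I − F`. Scientists are indexed `0,…,N-1` in descending
order of scientific capital, so the paper's `{1,…,i}` is `Finset.Iic k` for `k = i-1`. -/
noncomputable def payoff {N : ℕ} (h : Fin N → ℝ) (V d x F : ℝ)
    (I : Finset (Fin N)) (i : Fin N) : ℝ :=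
  V * h i / (∑ j ∈ I, h j) - h i * x * d / (∑ j ∈ I, h j) - F

/-- `I` is a Nash equilibrium of the basic game. -/
def IsEquil {N : ℕ} (h : Fin N → ℝ) (V d x F : ℝ) (I : Finset (Fin N)) : Prop :=
  (∀ i ∈ I, 0 ≤ payoff h V d x F I i) ∧
  (∀ j ∉ I, payoff h V d x F (insert j I) j ≤ 0)

theorem CovBy.finset_Iic_eq_insert {α : Type*} [LinearOrder α] [LocallyFiniteOrderBot α]
    {a b : α} (hab : a ⋖ b) : Iic b = insert b (Iic a) := by
  rw [← Iio_insert, ← coe_inj, coe_insert, coe_insert, coe_Iio, coe_Iic, hab.Iio_eq]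

section Payoff

variable {N : ℕ} (h : Fin N → ℝ) {V d x F : ℝ} {I : Finset (Fin N)} {i j : Fin N}

theorem payoff_eq :
    payoff h V d x F I i = (V - x * d) * h i / ∑ k ∈ I, h k - F := by
  unfold payoff
  ring

theorem net_value_pos_of_payoff_nonneg (hF : 0 < F) (hI : 0 < ∑ k ∈ I, h k) (hi : 0 < h i)
    (hU : 0 ≤ payoff h V d x F I i) : 0 < V - x * d := by
  rw [payoff_eq] at hU
  have : 0 < (V - x * d) * h i / ∑ k ∈ I, h k := by linarith
  exact pos_of_mul_pos_left ((div_pos_iff_of_pos_right hI).1 this) hi.le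

theorem payoff_le_payoff (hI : 0 < ∑ k ∈ I, h k) (hc : 0 ≤ V - x * d) (hij : h i ≤ h j) :
    payoff h V d x F I i ≤ payoff h V d x F I j := by
  simp only [payoff_eq, sub_le_sub_iff_right]
  gcongr

theorem payoff_lt_payoff (hI : 0 < ∑ k ∈ I, h k) (hc : 0 < V - x * d) (hij : h i < h j) :
    payoff h V d x F I i < payoff h V d x F I j := by
  simp only [payoff_eq, sub_lt_sub_iff_right]
  gcongr

theorem payoff_insert_le_payoff_insert (hi : i ∉ I) (hj : j ∉ I) (hI : 0 ≤ ∑ k ∈ I, h k)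
    (hpos : 0 < h i) (hc : 0 ≤ V - x * d) (hij : h i ≤ h j) :
    payoff h V d x F (insert i I) i ≤ payoff h V d x F (insert j I) j := by
  simp only [payoff_eq, sum_insert hi, sum_insert hj, sub_le_sub_iff_right]
  rw [div_le_div_iff₀ (by positivity) (by linarith)]
  nlinarith [mul_nonneg hc (mul_nonneg hI (sub_nonneg.2 hij))]

end Payoff

theorem top_set_is_equilibrium_general (N : ℕ) (h : Fin N → ℝ)
    (hpos : ∀ i, 0 < h i) (hdesc : ∀ i j : Fin N, i < j → h j < h i)
    (V d x F : ℝ) (hF : 0 < F)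
    (kstar : Fin N)
    (hkmem : 0 ≤ payoff h V d x F (Finset.Iic kstar) kstar)
    (hkmax : ∀ k : Fin N, 0 ≤ payoff h V d x F (Finset.Iic k) k → k ≤ kstar) :
    IsEquil h V d x F (Finset.Iic kstar) ∧
    (∀ i : Fin N, i < kstar → 0 < payoff h V d x F (Finset.Iic kstar) i) ∧
    (∀ i : Fin N, kstar < i → payoff h V d x F (insert i (Finset.Iic kstar)) i < 0) := by
  have hanti : StrictAnti h := fun i j => hdesc i j
  have hS : 0 < ∑ j ∈ Iic kstar, h j := sum_pos (fun i _ => hpos i) ⟨kstar, mem_Iic.2 le_rfl⟩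
  have hc : 0 < V - x * d := net_value_pos_of_payoff_nonneg h hF hS (hpos kstar) hkmem
  have hjoin : ∀ i, kstar < i → payoff h V d x F (insert i (Iic kstar)) i < 0 := by
    intro i hi
    obtain ⟨k, hcov, hki⟩ := exists_covBy_le_of_lt hi
    have hk : payoff h V d x F (Iic k) k < 0 :=
      not_le.1 fun hk => hcov.lt.not_ge (hkmax k hk)
    rw [hcov.finset_Iic_eq_insert] at hk
    exact (payoff_insert_le_payoff_insert h (by simpa using hi) (by simpa using hcov.lt) hS.le
      (hpos i) hc.le (hanti.antitone hki)).trans_lt hk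
  refine ⟨⟨fun i hi => ?_, fun j hj => ?_⟩, fun i hi => ?_, hjoin⟩
  · exact hkmem.trans (payoff_le_payoff h hS hc.le (hanti.antitone (mem_Iic.1 hi)))
  · exact (hjoin j (by simpa using hj)).le
  · exact hkmem.trans_lt (payoff_lt_payoff h hS hc (hanti hi))

/-- with `V − d·x − F > 0`, the top-capital set `I* = {1,…,i*}`,
where `i*` is the largest `i` with `U_i({1,…,i}) ≥ 0`, is a Nash equilibrium; every
scientist `i < i*` has strictly positive payoff in `I*`, and every scientist `i > i*`
would get a strictly negative payoff upon joining `I*`. -/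
theorem top_set_is_equilibrium (N : ℕ) (h : Fin N → ℝ)
    (hpos : ∀ i, 0 < h i) (hdesc : ∀ i j : Fin N, i < j → h j < h i)
    (V d x F : ℝ) (hV : 0 < V) (hd : 0 < d) (hx : 0 < x) (hF : 0 < F)
    (hgain : 0 < V - d * x - F)
    (kstar : Fin N)
    (hkmem : 0 ≤ payoff h V d x F (Finset.Iic kstar) kstar)
    (hkmax : ∀ k : Fin N, 0 ≤ payoff h V d x F (Finset.Iic k) k → k ≤ kstar) :
    IsEquil h V d x F (Finset.Iic kstar) ∧
    (∀ i : Fin N, i < kstar → 0 < payoff h V d x F (Finset.Iic kstar) i) ∧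
    (∀ i : Fin N, kstar < i → payoff h V d x F (insert i (Finset.Iic kstar)) i < 0) :=
  top_set_is_equilibrium_general N h hpos hdesc V d x F hF kstar hkmem hkmax
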